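/- arXiv:math/0406169 — 5 statements merged into one kernel-verified Lean document; each statement's English description precedes it below -/
import Mathlib

section
/- Let f and g be complex affine functions on ℂ² with ∥∇f∥ = ∥∇g∥ = 1, and suppose the sets {f=0} ∩ ∂𝔹² and {g=0} ∩ ∂𝔹² are disjoint. Then there exist positive numbers a and r' < 1 such that for every ε > 0, every point z with r' ≤ ∥z∥ ≤ 1 and |f(z)·g(z)| ≤ aε satisfies |f(z)| ≤ ε or |g(z)| ≤ ε. -/
/-! On the unit sphere `‖f z‖ + ‖g z‖` is continuous and, since the zero sets of `f` and `g` do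
not meet there, positive; by compactness it is bounded below by some `c > 0`. A unit gradient
makes `f` and `g` 1-Lipschitz (Cauchy–Schwarz), so comparing `z` with its radial projection
`z / ‖z‖` gives `‖f z‖ + ‖g z‖ ≥ c / 2` on the shell `1 - c / 4 ≤ ‖z‖ ≤ 1`. There the larger of
`‖f z‖`, `‖g z‖` is at least `c / 4`, so with `a = c / 4` the two cannot both exceed `ε` while
`‖f z * g z‖ ≤ a ε`. -/

open Metric NNReal

lemma lipschitzWith_one_affine {c₁ c₂ : ℂ} (hc : ‖c₁‖ ^ 2 + ‖c₂‖ ^ 2 = 1) (c₀ : ℂ) :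
    LipschitzWith 1 fun z : EuclideanSpace ℂ (Fin 2) => c₀ + c₁ * z 0 + c₂ * z 1 := by
  set v : EuclideanSpace ℂ (Fin 2) := !₂[star c₁, star c₂]
  have hv : ‖v‖ = 1 := by simp [v, EuclideanSpace.norm_eq, Fin.sum_univ_two, hc]
  have hinner (z : EuclideanSpace ℂ (Fin 2)) : c₁ * z 0 + c₂ * z 1 = inner ℂ v z := by
    simp [v, PiLp.inner_apply, Fin.sum_univ_two, mul_comm]
  refine LipschitzWith.of_dist_le_mul fun z w => ?_
  calc dist (c₀ + c₁ * z 0 + c₂ * z 1) (c₀ + c₁ * w 0 + c₂ * w 1)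
      = ‖inner ℂ v (z - w)‖ := by
        rw [dist_eq_norm, inner_sub_right, ← hinner, ← hinner]; ring_nf
    _ ≤ ‖v‖ * ‖z - w‖ := norm_inner_le_norm _ _
    _ = (1 : ℝ≥0) * dist z w := by rw [hv, dist_eq_norm, NNReal.coe_one]

lemma dist_inv_norm_smul_self {E : Type*} [NormedAddCommGroup E] [NormedSpace ℝ E] {z : E}
    (hz : z ≠ 0) : dist z (‖z‖⁻¹ • z) = |1 - ‖z‖| := by
  have hr : 0 < ‖z‖ := norm_pos_iff.2 hz
  have hsub : z - ‖z‖⁻¹ • z = (1 - ‖z‖⁻¹) • z := by rw [sub_smul, one_smul]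
  rw [dist_eq_norm, hsub, norm_smul, Real.norm_eq_abs, ← abs_of_pos hr, ← abs_mul,
    abs_of_pos hr, abs_sub_comm]
  congr 1
  field_simp

lemma LipschitzWith.sub_mul_abs_le_of_forall_mem_sphere {E : Type*} [NormedAddCommGroup E]
    [NormedSpace ℝ E] {φ : E → ℝ} {K : ℝ≥0} {c : ℝ} (hφ : LipschitzWith K φ)
    (hc : ∀ u ∈ sphere (0 : E) 1, c ≤ φ u) {z : E} (hz : z ≠ 0) :
    c - K * |1 - ‖z‖| ≤ φ z := by
  have hu : ‖z‖⁻¹ • z ∈ sphere (0 : E) 1 := by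
    simpa using norm_smul_inv_norm (𝕜 := ℝ) hz
  have hdist := hφ.dist_le_mul z (‖z‖⁻¹ • z)
  rw [dist_inv_norm_smul_self hz, Real.dist_eq] at hdist
  linarith [hc _ hu, neg_abs_le (φ z - φ (‖z‖⁻¹ • z))]

lemma le_or_le_of_mul_le_of_two_mul_le_add {x y a ε : ℝ} (hx : 0 ≤ x) (hy : 0 ≤ y) (ha : 0 < a)
    (hsum : 2 * a ≤ x + y) (hxy : x * y ≤ a * ε) : x ≤ ε ∨ y ≤ ε := by
  by_contra! h
  rcases le_total x y with hle | hle <;> nlinarith [h.1, h.2]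

/-- Main lemma: for affine `f, g` with unit gradient whose zero circles on the unit
sphere are disjoint, there are `a > 0` and `r' < 1` with the stated dichotomy. -/
theorem stmt_0 (f₀ f₁ f₂ g₀ g₁ g₂ : ℂ)
    (hf : ‖f₁‖ ^ 2 + ‖f₂‖ ^ 2 = 1) (hg : ‖g₁‖ ^ 2 + ‖g₂‖ ^ 2 = 1)
    (hdisj : Disjoint
      ({z : EuclideanSpace ℂ (Fin 2) | f₀ + f₁ * z 0 + f₂ * z 1 = 0} ∩ Metric.sphere 0 1)
      ({z : EuclideanSpace ℂ (Fin 2) | g₀ + g₁ * z 0 + g₂ * z 1 = 0} ∩ Metric.sphere 0 1)) :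
    ∃ a > (0 : ℝ), ∃ r' > (0 : ℝ), r' < 1 ∧
      ∀ ε > (0 : ℝ), ∀ z : EuclideanSpace ℂ (Fin 2),
        r' ≤ ‖z‖ → ‖z‖ ≤ 1 →
        ‖(f₀ + f₁ * z 0 + f₂ * z 1) * (g₀ + g₁ * z 0 + g₂ * z 1)‖ ≤ a * ε →
        ‖f₀ + f₁ * z 0 + f₂ * z 1‖ ≤ ε ∨ ‖g₀ + g₁ * z 0 + g₂ * z 1‖ ≤ ε := by
  set F := fun z : EuclideanSpace ℂ (Fin 2) => f₀ + f₁ * z 0 + f₂ * z 1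
  set G := fun z : EuclideanSpace ℂ (Fin 2) => g₀ + g₁ * z 0 + g₂ * z 1
  have hφ : LipschitzWith 2 fun z => ‖F z‖ + ‖G z‖ := by
    simpa [one_add_one_eq_two] using
      (lipschitzWith_one_norm.comp (lipschitzWith_one_affine hf f₀)).add
        (lipschitzWith_one_norm.comp (lipschitzWith_one_affine hg g₀))
  have hpos : ∀ u ∈ sphere (0 : EuclideanSpace ℂ (Fin 2)) 1, 0 < ‖F u‖ + ‖G u‖ := by
    intro u hu
    refine lt_of_le_of_ne (by positivity) fun h0 => ?_
    have hF : F u = 0 := norm_eq_zero.1 (by linarith [norm_nonneg (F u), norm_nonneg (G u)])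
    have hG : G u = 0 := norm_eq_zero.1 (by linarith [norm_nonneg (F u), norm_nonneg (G u)])
    exact Set.disjoint_left.1 hdisj ⟨hF, hu⟩ ⟨hG, hu⟩
  obtain ⟨c, hc, hcφ⟩ := (isCompact_sphere _ _).exists_forall_le' hφ.continuous.continuousOn hpos
  refine ⟨c / 4, by positivity, max (1 / 2) (1 - c / 4), by positivity,
    max_lt (by norm_num) (by linarith), fun ε _ z hr hr1 hprod => ?_⟩
  have hz : z ≠ 0 := norm_pos_iff.1 ((lt_max_of_lt_left one_half_pos).trans_le hr)
  have hshell := hφ.sub_mul_abs_le_of_forall_mem_sphere hcφ hz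
  rw [abs_of_nonneg (sub_nonneg.2 hr1), NNReal.coe_ofNat] at hshell
  rw [norm_mul] at hprod
  refine le_or_le_of_mul_le_of_two_mul_le_add (norm_nonneg _) (norm_nonneg _) (by positivity)
    ?_ hprod
  linarith [le_max_right (1 / 2 : ℝ) (1 - c / 4)]
end

section
/- Let a > 0 and ε > 0, and let f, g be complex affine functions on ℂ². If there exist positive constants a and r' < 1 such that every z with r' ≤ ∥z∥ ≤ 1 and |f(z)g(z)| ≤ aε satisfies |f(z)| ≤ ε or |g(z)| ≤ ε, then for every r ∈ [r', 1], the set {z : |f(z)g(z)| ≤ aε, ∥z∥ ≤ r} is contained in the polynomial hull of ({|f| ≤ ε} ∪ {|g| ≤ ε}) ∩ r∂𝔹². -/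
/-!
Through every point `z₀`, the level set `{f g = f(z₀) g(z₀)}` contains a holomorphic curve which
is proper over the open `r`-ball: a complex line when `f(z₀) g(z₀) = 0` or the linear parts of `f`
and `g` are dependent, and otherwise the hyperbola `s ↦ z₀ + (s - 1) a + (s⁻¹ - 1) b`, `s ∈ ℂ*`,
along which `f = s f(z₀)` and `g = s⁻¹ g(z₀)`. For `‖z₀‖ < r`, the maximum principle on the part
of the curve inside the ball bounds `|p(z₀)|` by `|p|` at a point of the curve on the `r`-sphere,
where the dichotomy puts it in `{|f| ≤ ε} ∪ {|g| ≤ ε}`.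
-/

open Set Metric Module

/-- The polynomial hull of a set `K ⊆ ℂⁿ`. -/
noncomputable def polyHull {n : ℕ} (K : Set (EuclideanSpace ℂ (Fin n))) :
    Set (EuclideanSpace ℂ (Fin n)) :=
  {z | ∀ p : MvPolynomial (Fin n) ℂ,
    ‖MvPolynomial.eval (fun i => z i) p‖ ≤
      sSup ((fun w : EuclideanSpace ℂ (Fin n) => ‖MvPolynomial.eval (fun i => w i) p‖) '' K)}

variable {E : Type*} [NormedAddCommGroup E] [NormedSpace ℂ E]

/-- The restriction of `ψ` to the preimage of the open `r`-ball is proper, so `ψ` maps the frontier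
of that preimage to the `r`-sphere. -/
def LiesOnProperCurve (S : Set E) (r : ℝ) (z₀ : E) : Prop :=
  ∃ (Ω A : Set ℂ) (ψ : ℂ → E) (t₀ : ℂ), IsOpen Ω ∧ IsCompact A ∧ A ⊆ Ω ∧
    DifferentiableOn ℂ ψ Ω ∧ MapsTo ψ Ω S ∧ {t ∈ Ω | ‖ψ t‖ < r} ⊆ A ∧ t₀ ∈ Ω ∧ ψ t₀ = z₀

theorem LiesOnProperCurve.exists_norm_le {S : Set E} {r : ℝ} {z₀ : E}
    (hc : LiesOnProperCurve S r z₀) (hz₀ : ‖z₀‖ < r) {h : E → ℂ} (hh : Differentiable ℂ h) :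
    ∃ w ∈ S, ‖w‖ = r ∧ ‖h z₀‖ ≤ ‖h w‖ := by
  obtain ⟨Ω, A, ψ, t₀, hΩ, hA, hAΩ, hψ, hψS, hsub, ht₀, rfl⟩ := hc
  set D := {t ∈ Ω | ‖ψ t‖ < r}
  have hDopen : IsOpen D := hψ.continuousOn.norm.isOpen_inter_preimage hΩ isOpen_Iio
  have hclD : closure D ⊆ Ω := (closure_minimal hsub hA.isClosed).trans hAΩ
  obtain ⟨t, ht, hmax⟩ := Complex.exists_mem_frontier_isMaxOn_norm (hA.isBounded.subset hsub)
    ⟨t₀, ht₀, hz₀⟩ (hh.comp_differentiableOn (hψ.mono hclD)).diffContOnCl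
  have htΩ : t ∈ Ω := hclD (frontier_subset_closure ht)
  have hle : ‖ψ t‖ ≤ r :=
    ContinuousWithinAt.closure_le (frontier_subset_closure ht)
      (hψ.continuousOn.continuousAt (hΩ.mem_nhds htΩ)).norm.continuousWithinAt
      continuousWithinAt_const fun _ hs => hs.2.le
  have hge : r ≤ ‖ψ t‖ := not_lt.1 fun hlt => (hDopen.frontier_eq ▸ ht).2 ⟨htΩ, hlt⟩
  exact ⟨ψ t, hψS htΩ, hle.antisymm hge, hmax (subset_closure ⟨ht₀, hz₀⟩)⟩

theorem liesOnProperCurve_of_line {S : Set E} {z₀ v : E} (hv : v ≠ 0)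
    (hS : ∀ t : ℂ, z₀ + t • v ∈ S) (r : ℝ) : LiesOnProperCurve S r z₀ := by
  refine ⟨univ, closedBall 0 ((r + ‖z₀‖) / ‖v‖), fun t => z₀ + t • v, 0, isOpen_univ,
    isCompact_closedBall _ _, subset_univ _, by fun_prop, fun t _ => hS t, ?_, mem_univ _,
    by simp⟩
  rintro t ⟨-, ht⟩
  rw [mem_closedBall_zero_iff, le_div_iff₀ (norm_pos_iff.2 hv), ← norm_smul]
  calc ‖t • v‖ = ‖(z₀ + t • v) - z₀‖ := by simp
    _ ≤ ‖z₀ + t • v‖ + ‖z₀‖ := norm_sub_le _ _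
    _ ≤ r + ‖z₀‖ := by linarith

theorem ContinuousAffineMap.apply_add {R V W : Type*} [Ring R] [AddCommGroup V] [Module R V]
    [TopologicalSpace V] [IsTopologicalAddGroup V] [AddCommGroup W] [Module R W]
    [TopologicalSpace W] [IsTopologicalAddGroup W]
    (f : V →ᴬ[R] W) (z v : V) : f (z + v) = f z + f.contLinear v := by
  rw [add_comm z, ← vadd_eq_add, f.map_vadd, vadd_eq_add, add_comm]

theorem liesOnProperCurve_of_hyperbola [ProperSpace E] (f g : E →ᴬ[ℂ] ℂ) {z₀ a b : E}
    (hf : f z₀ ≠ 0) (hg : g z₀ ≠ 0) (hfa : f.contLinear a = f z₀) (hga : g.contLinear a = 0)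
    (hfb : f.contLinear b = 0) (hgb : g.contLinear b = g z₀) (r : ℝ) :
    LiesOnProperCurve {z | f z * g z = f z₀ * g z₀} r z₀ := by
  set ψ : ℂ → E := fun s => z₀ + (s - 1) • a + (s⁻¹ - 1) • b
  have hfψ (s : ℂ) : f (ψ s) = s * f z₀ := by
    simp only [ψ, ContinuousAffineMap.apply_add, map_smul, hfa, hfb, smul_eq_mul]; ring
  have hgψ (s : ℂ) : g (ψ s) = s⁻¹ * g z₀ := by
    simp only [ψ, ContinuousAffineMap.apply_add, map_smul, hga, hgb, smul_eq_mul]; ring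
  obtain ⟨Cf, hCf⟩ := (isCompact_closedBall (0 : E) r).exists_bound_of_continuousOn
    f.continuous.continuousOn
  obtain ⟨Cg, hCg⟩ := (isCompact_closedBall (0 : E) r).exists_bound_of_continuousOn
    g.continuous.continuousOn
  refine ⟨{0}ᶜ, {s | ‖f z₀‖ * ‖s‖ ≤ Cf} ∩ {s | ‖g z₀‖ ≤ Cg * ‖s‖}, ψ, 1, isOpen_compl_singleton,
    ?_, ?_, ?_, ?_, ?_, one_ne_zero, by simp [ψ]⟩
  · refine isCompact_of_isClosed_isBounded ?_
      ((isBounded_closedBall (x := 0) (r := Cf / ‖f z₀‖)).subset fun s hs => ?_)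
    · exact (isClosed_le (by fun_prop) continuous_const).inter
        (isClosed_le continuous_const (by fun_prop))
    · rw [mem_closedBall_zero_iff, le_div_iff₀ (norm_pos_iff.2 hf), mul_comm]
      exact hs.1
  · rintro s ⟨-, hs⟩ (rfl : s = 0)
    exact hg (norm_le_zero_iff.1 (by simpa using hs))
  · fun_prop (disch := assumption)
  · intro s hs
    simp only [mem_ofPred, hfψ, hgψ]
    rw [mul_mul_mul_comm, mul_inv_cancel₀ hs, one_mul]
  · rintro s ⟨hs, hψs⟩
    have hball : ψ s ∈ closedBall 0 r := mem_closedBall_zero_iff.2 hψs.le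
    have hfs := hCf _ hball
    have hgs := hCg _ hball
    rw [hfψ, norm_mul, mul_comm] at hfs
    rw [hgψ, norm_mul, norm_inv, inv_mul_le_iff₀ (norm_pos_iff.2 hs), mul_comm ‖s‖] at hgs
    exact ⟨hfs, hgs⟩

theorem LinearMap.exists_ne_zero_apply_eq_zero {K V : Type*} [Field K] [AddCommGroup V]
    [Module K V] [FiniteDimensional K V] (hV : 1 < finrank K V) (φ : V →ₗ[K] K) :
    ∃ v ≠ 0, φ v = 0 := by
  obtain ⟨v, hv, hv0⟩ := Submodule.exists_mem_ne_zero_of_ne_bot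
    (LinearMap.ker_ne_bot_of_finrank_lt (f := φ) (by rwa [finrank_self]))
  exact ⟨v, hv0, hv⟩

theorem liesOnProperCurve_of_contLinear_eq_zero (f g : E →ᴬ[ℂ] ℂ) {z₀ v : E} (hv : v ≠ 0)
    (hfv : f.contLinear v = 0) (h : f z₀ = 0 ∨ g.contLinear v = 0) (r : ℝ) :
    LiesOnProperCurve {z | f z * g z = f z₀ * g z₀} r z₀ :=
  liesOnProperCurve_of_line hv (fun t => by
    rcases h with h | h <;> simp [ContinuousAffineMap.apply_add, hfv, h]) r

theorem liesOnProperCurve_mul_eq [FiniteDimensional ℂ E] (hE : 1 < finrank ℂ E)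
    (f g : E →ᴬ[ℂ] ℂ) (z₀ : E) (r : ℝ) :
    LiesOnProperCurve {z | f z * g z = f z₀ * g z₀} r z₀ := by
  have hswap : {z | g z * f z = g z₀ * f z₀} = {z | f z * g z = f z₀ * g z₀} := by
    simp only [mul_comm]
  have hker (φ : E →ᴬ[ℂ] ℂ) := LinearMap.exists_ne_zero_apply_eq_zero hE φ.contLinear
  by_cases hf : f z₀ = 0
  · obtain ⟨v, hv, hfv⟩ := hker f
    exact liesOnProperCurve_of_contLinear_eq_zero f g hv hfv (.inl hf) r
  by_cases hg : g z₀ = 0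
  · obtain ⟨v, hv, hgv⟩ := hker g
    exact hswap ▸ liesOnProperCurve_of_contLinear_eq_zero g f hv hgv (.inl hg) r
  by_cases ha : ∃ a, f.contLinear a ≠ 0 ∧ g.contLinear a = 0
  · by_cases hb : ∃ b, f.contLinear b = 0 ∧ g.contLinear b ≠ 0
    · obtain ⟨a, hfa, hga⟩ := ha
      obtain ⟨b, hfb, hgb⟩ := hb
      exact liesOnProperCurve_of_hyperbola f g (a := (f z₀ / f.contLinear a) • a)
        (b := (g z₀ / g.contLinear b) • b) hf hg
        (by rw [map_smul, smul_eq_mul, div_mul_cancel₀ _ hfa]) (by simp [hga])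
        (by simp [hfb]) (by rw [map_smul, smul_eq_mul, div_mul_cancel₀ _ hgb]) r
    · obtain ⟨v, hv, hfv⟩ := hker f
      exact liesOnProperCurve_of_contLinear_eq_zero f g hv hfv
        (.inr (by_contra fun hgv => hb ⟨v, hfv, hgv⟩)) r
  · obtain ⟨v, hv, hgv⟩ := hker g
    exact hswap ▸ liesOnProperCurve_of_contLinear_eq_zero g f hv hgv
      (.inr (by_contra fun hfv => ha ⟨v, hfv, hgv⟩)) r

theorem MvPolynomial.differentiable_eval_euclideanSpace {ι : Type*} [Fintype ι]
    (p : MvPolynomial ι ℂ) :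
    Differentiable ℂ fun w : EuclideanSpace ℂ ι => MvPolynomial.eval (fun i => w i) p := by
  have := AnalyticOnNhd.eval_continuousLinearMap' (fun i => EuclideanSpace.proj (𝕜 := ℂ) i) p
  exact differentiableOn_univ.1 this.differentiableOn

theorem mem_polyHull_of_liesOnProperCurve {n : ℕ} {K S : Set (EuclideanSpace ℂ (Fin n))}
    {r : ℝ} {z₀ : EuclideanSpace ℂ (Fin n)} (hK : IsCompact K) (hSK : S ∩ sphere 0 r ⊆ K)
    (hc : LiesOnProperCurve S r z₀) (hz₀ : ‖z₀‖ ≤ r) : z₀ ∈ polyHull K := by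
  intro p
  have hp := MvPolynomial.differentiable_eval_euclideanSpace p
  have hz₀S : z₀ ∈ S := by
    obtain ⟨_, _, ψ, t₀, -, -, -, -, hψS, -, ht₀, rfl⟩ := hc
    exact hψS ht₀
  obtain ⟨w, hwS, hw, hle⟩ : ∃ w ∈ S, ‖w‖ = r ∧ ‖MvPolynomial.eval (fun i => z₀ i) p‖ ≤
      ‖MvPolynomial.eval (fun i => w i) p‖ :=
    hz₀.eq_or_lt.elim (fun h => ⟨z₀, hz₀S, h, le_rfl⟩) (hc.exists_norm_le · hp)
  exact hle.trans (le_csSup (hK.image hp.continuous.norm).bddAbove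
    ⟨w, hSK ⟨hwS, mem_sphere_zero_iff_norm.2 hw⟩, rfl⟩)

noncomputable def affineMapOfCoeffs (c₀ c₁ c₂ : ℂ) : EuclideanSpace ℂ (Fin 2) →ᴬ[ℂ] ℂ :=
  ContinuousAffineMap.const ℂ _ c₀ + (c₁ • EuclideanSpace.proj 0 + c₂ • EuclideanSpace.proj 1 :
    EuclideanSpace ℂ (Fin 2) →L[ℂ] ℂ).toContinuousAffineMap

theorem affineMapOfCoeffs_apply (c₀ c₁ c₂ : ℂ) (z : EuclideanSpace ℂ (Fin 2)) :
    affineMapOfCoeffs c₀ c₁ c₂ z = c₀ + c₁ * z 0 + c₂ * z 1 := by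
  simp [affineMapOfCoeffs, add_assoc]

theorem stmt_1_general (a ε : ℝ) (f₀ f₁ f₂ g₀ g₁ g₂ : ℂ)
    (r' : ℝ)
    (hdich : ∀ z : EuclideanSpace ℂ (Fin 2), r' ≤ ‖z‖ → ‖z‖ ≤ 1 →
      ‖(f₀ + f₁ * z 0 + f₂ * z 1) * (g₀ + g₁ * z 0 + g₂ * z 1)‖ ≤ a * ε →
      ‖f₀ + f₁ * z 0 + f₂ * z 1‖ ≤ ε ∨ ‖g₀ + g₁ * z 0 + g₂ * z 1‖ ≤ ε) :
    ∀ r : ℝ, r' ≤ r → r ≤ 1 →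
      {z : EuclideanSpace ℂ (Fin 2) |
          ‖(f₀ + f₁ * z 0 + f₂ * z 1) * (g₀ + g₁ * z 0 + g₂ * z 1)‖ ≤ a * ε ∧ ‖z‖ ≤ r} ⊆
        polyHull (({z : EuclideanSpace ℂ (Fin 2) | ‖f₀ + f₁ * z 0 + f₂ * z 1‖ ≤ ε} ∪
            {z : EuclideanSpace ℂ (Fin 2) | ‖g₀ + g₁ * z 0 + g₂ * z 1‖ ≤ ε}) ∩
          Metric.sphere 0 r) := by
  intro r hr'r hr1 z₀ ⟨hz₀, hz₀r⟩
  refine mem_polyHull_of_liesOnProperCurve ((isCompact_sphere 0 r).inter_left ?_) ?_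
    (liesOnProperCurve_mul_eq (by simp) (affineMapOfCoeffs f₀ f₁ f₂)
      (affineMapOfCoeffs g₀ g₁ g₂) z₀ r) hz₀r
  · exact (isClosed_le (by fun_prop) continuous_const).union
      (isClosed_le (by fun_prop) continuous_const)
  · rintro w ⟨hw, hwr⟩
    simp only [mem_ofPred, affineMapOfCoeffs_apply] at hw
    have hwr' : ‖w‖ = r := mem_sphere_zero_iff_norm.1 hwr
    exact ⟨hdich w (hwr' ▸ hr'r) (hwr' ▸ hr1) (hw ▸ hz₀), hwr⟩

/-- Corollary 1: the dichotomy of the main lemma implies that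
`{|fg| ≤ aε} ∩ {‖z‖ ≤ r}` is contained in the polynomial hull of
`({|f| ≤ ε} ∪ {|g| ≤ ε}) ∩ r∂𝔹²` for every r ∈ [r', 1]. -/
theorem stmt_1 (a ε : ℝ) (ha : 0 < a) (hε : 0 < ε) (f₀ f₁ f₂ g₀ g₁ g₂ : ℂ)
    (r' : ℝ) (hr'0 : 0 < r') (hr'1 : r' < 1)
    (hdich : ∀ z : EuclideanSpace ℂ (Fin 2), r' ≤ ‖z‖ → ‖z‖ ≤ 1 →
      ‖(f₀ + f₁ * z 0 + f₂ * z 1) * (g₀ + g₁ * z 0 + g₂ * z 1)‖ ≤ a * ε →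
      ‖f₀ + f₁ * z 0 + f₂ * z 1‖ ≤ ε ∨ ‖g₀ + g₁ * z 0 + g₂ * z 1‖ ≤ ε) :
    ∀ r : ℝ, r' ≤ r → r ≤ 1 →
      {z : EuclideanSpace ℂ (Fin 2) |
          ‖(f₀ + f₁ * z 0 + f₂ * z 1) * (g₀ + g₁ * z 0 + g₂ * z 1)‖ ≤ a * ε ∧ ‖z‖ ≤ r} ⊆
        polyHull (({z : EuclideanSpace ℂ (Fin 2) | ‖f₀ + f₁ * z 0 + f₂ * z 1‖ ≤ ε} ∪
            {z : EuclideanSpace ℂ (Fin 2) | ‖g₀ + g₁ * z 0 + g₂ * z 1‖ ≤ ε}) ∩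
          Metric.sphere 0 r) :=
  stmt_1_general a ε f₀ f₁ f₂ g₀ g₁ g₂ r' hdich
end

section
/- For any β ∈ (0,1) there exists q ∈ (0,1) such that the closed ball of radius β in ℂ² can be covered by a finite union of bidiscs of the form q(D̄₁ × D̄₂), where D₁, D₂ are open discs in ℂ centered at 0 whose radii R₁, R₂ satisfy R₁² + R₂² = 1. -/
lemma sq_le_imp (a b : ℝ) (hb : 0 ≤ b) (h : a ^ 2 ≤ b ^ 2) : a ≤ b := by
  nlinarith [sq_nonneg (a - b), sq_nonneg (a + b)]

/-- Lemma 1: the closed ball of radius β < 1 in ℂ² is covered by finitely many bidiscs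
q(D̄₁ × D̄₂) with ∂D₁ × ∂D₂ contained in the unit sphere. -/
theorem stmt_3 (β : ℝ) (hβ0 : 0 < β) (hβ1 : β < 1) :
    ∃ q : ℝ, 0 < q ∧ q < 1 ∧
      ∃ (m : ℕ) (R₁ R₂ : Fin m → ℝ),
        (∀ i, 0 < R₁ i ∧ 0 < R₂ i ∧ (R₁ i) ^ 2 + (R₂ i) ^ 2 = 1) ∧
        Metric.closedBall (0 : EuclideanSpace ℂ (Fin 2)) β ⊆
          ⋃ i, {z : EuclideanSpace ℂ (Fin 2) | ‖z 0‖ ≤ q * R₁ i ∧ ‖z 1‖ ≤ q * R₂ i} := by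
  set q : ℝ := (1 + β) / 2 with hq
  have hq0 : 0 < q := by rw [hq]; linarith
  have hq1 : q < 1 := by rw [hq]; linarith
  have hβq : β < q := by rw [hq]; linarith
  clear_value q
  refine ⟨q, hq0, hq1, ?_⟩
  set θ : ℝ := β ^ 2 / q ^ 2 with hθ
  have hθ0 : 0 ≤ θ := by positivity
  have hθ1 : θ < 1 := by
    rw [hθ, div_lt_one (by positivity)]
    nlinarith
  set N : ℕ := ⌈θ / (1 - θ)⌉₊ + 1 with hNdef
  have hNθ : θ / (1 - θ) < (N : ℝ) := by
    have h1 : θ / (1 - θ) ≤ (⌈θ / (1 - θ)⌉₊ : ℝ) := Nat.le_ceil _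
    have h2 : ((⌈θ / (1 - θ)⌉₊ : ℝ) + 1) = (N : ℝ) := by rw [hNdef]; push_cast; ring
    linarith
  have hN : θ * ((N : ℝ) + 1) < N := by
    rw [div_lt_iff₀ (by linarith)] at hNθ
    nlinarith
  have hN1 : (0 : ℝ) < (N : ℝ) + 1 := by positivity
  clear_value N
  clear hNdef hNθ
  refine ⟨N, fun i => Real.sqrt (((i : ℕ) + 1) / ((N : ℝ) + 1)),
    fun i => Real.sqrt (((N : ℝ) - (i : ℕ)) / ((N : ℝ) + 1)), ?_, ?_⟩
  · intro i
    have hiN : ((i : ℕ) : ℝ) < (N : ℝ) := by exact_mod_cast i.isLt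
    have h1 : (0 : ℝ) < (((i : ℕ) : ℝ) + 1) / ((N : ℝ) + 1) := by positivity
    have h2 : (0 : ℝ) < ((N : ℝ) - ((i : ℕ) : ℝ)) / ((N : ℝ) + 1) := by
      apply div_pos (by linarith) hN1
    refine ⟨Real.sqrt_pos.mpr h1, Real.sqrt_pos.mpr h2, ?_⟩
    rw [Real.sq_sqrt h1.le, Real.sq_sqrt h2.le]
    field_simp
    ring
  · intro z hz
    rw [Metric.mem_closedBall, dist_zero_right] at hz
    have hnorm : ‖z‖ ^ 2 = ‖z 0‖ ^ 2 + ‖z 1‖ ^ 2 := by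
      rw [EuclideanSpace.norm_eq]
      rw [Real.sq_sqrt (by positivity)]
      simp [Fin.sum_univ_two]
    have hrs : ‖z 0‖ ^ 2 + ‖z 1‖ ^ 2 ≤ β ^ 2 := by
      rw [← hnorm]
      nlinarith [norm_nonneg z]
    set r : ℝ := ‖z 0‖ with hr
    set s : ℝ := ‖z 1‖ with hs
    have hr0 : 0 ≤ r := norm_nonneg _
    have hs0 : 0 ≤ s := norm_nonneg _
    set u : ℝ := r ^ 2 / q ^ 2 with hu
    have hu0 : 0 ≤ u := by positivity
    have huθ : u ≤ θ := by
      rw [hu, hθ]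
      apply div_le_div_of_nonneg_right (by nlinarith) (by positivity)
    clear_value r s u θ
    set k : ℕ := ⌊u * ((N : ℝ) + 1)⌋₊ with hk
    have hkle : (k : ℝ) ≤ u * ((N : ℝ) + 1) := Nat.floor_le (by positivity)
    have hklt : u * ((N : ℝ) + 1) < (k : ℝ) + 1 := Nat.lt_floor_add_one _
    clear_value k
    have hkN : k < N := by
      have : (k : ℝ) < (N : ℝ) := by nlinarith
      exact_mod_cast this
    rw [Set.mem_iUnion]
    refine ⟨⟨k, hkN⟩, ?_, ?_⟩
    · rw [← hr]
      show r ≤ q * Real.sqrt (((k : ℕ) + 1) / ((N : ℝ) + 1))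
      apply sq_le_imp _ _ (by positivity)
      rw [mul_pow, Real.sq_sqrt (by positivity)]
      have hru : r ^ 2 = u * q ^ 2 := by rw [hu]; field_simp
      rw [hru]
      have h2 : u ≤ ((k : ℝ) + 1) / ((N : ℝ) + 1) := by
        rw [le_div_iff₀ hN1]; linarith
      nlinarith [sq_nonneg q]
    · rw [← hs]
      show s ≤ q * Real.sqrt (((N : ℝ) - (k : ℕ)) / ((N : ℝ) + 1))
      apply sq_le_imp _ _ (by positivity)
      rw [mul_pow, Real.sq_sqrt (by
        apply div_nonneg _ hN1.le
        have : (k : ℝ) < (N : ℝ) := by exact_mod_cast hkN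
        linarith)]
      have hs2 : s ^ 2 ≤ q ^ 2 * (θ - u) := by
        have : r ^ 2 = u * q ^ 2 := by rw [hu]; field_simp
        have hβ2 : β ^ 2 = θ * q ^ 2 := by rw [hθ]; field_simp
        linarith
      have hkey : θ - u ≤ ((N : ℝ) - (k : ℝ)) / ((N : ℝ) + 1) := by
        rw [le_div_iff₀ hN1, sub_mul]
        linarith
      calc s ^ 2 ≤ q ^ 2 * (θ - u) := hs2
        _ ≤ q ^ 2 * (((N : ℝ) - (k : ℝ)) / ((N : ℝ) + 1)) :=
            mul_le_mul_of_nonneg_left hkey (sq_nonneg q)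
end

section
/- Let s ∈ (0,1), t ∈ (0,1), R₂ = √(2s-s²), and R satisfy (2t - t²)(2s - s²) = 1 - R². For φ ∈ [0,2π), let p = (1-s, R₂(1-t)e^{iφ}) and v = ((1-t)R₂, -(1-s)e^{iφ}). Then ∥p∥ = R, ∥v∥ = R, and the complex line ℓ = {p + vζ : ζ ∈ ℂ} is complex tangent to the sphere R∂𝔹² at p, i.e. the Hermitian inner product ⟨v, p⟩ = 0. -/
/-!
Write `x = 1 - s`, `y = R₂ (1 - t)` and `u = e^{iφ}`. Then `p = (x, y u)` and `v = (y, -x u)`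
is its image under `(a, b) ↦ (b̄ u, -ā u)`, an antiunitary map sending every vector to one
Hermitian-orthogonal to it; hence `‖v‖ = ‖p‖` and `⟨v, p⟩ = 0`. Finally
`‖p‖² = (1 - s)² + (2s - s²)(1 - t)² = 1 - (2t - t²)(2s - s²) = R²`.
-/

/-- An element of ℂ² from two coordinates. -/
noncomputable def e2 (a b : ℂ) : EuclideanSpace ℂ (Fin 2) := WithLp.toLp 2 ![a, b]

lemma norm_e2_sq (a b : ℂ) : ‖e2 a b‖ ^ 2 = ‖a‖ ^ 2 + ‖b‖ ^ 2 := by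
  simp [e2, EuclideanSpace.norm_sq_eq, Fin.sum_univ_two]

lemma inner_e2 (a b c d : ℂ) :
    (inner ℂ (e2 a b) (e2 c d) : ℂ) = starRingEnd ℂ a * c + starRingEnd ℂ b * d := by
  simp [e2, PiLp.inner_apply, Fin.sum_univ_two, RCLike.inner_apply, mul_comm]

section Rotation

variable (x y : ℝ) {u : ℂ}

lemma norm_e2_ofReal_ofReal_mul (hu : ‖u‖ = 1) :
    ‖e2 x (y * u)‖ = Real.sqrt (x ^ 2 + y ^ 2) := by
  rw [← Real.sqrt_sq (norm_nonneg _), norm_e2_sq, norm_mul, hu, mul_one, Complex.norm_real,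
    Complex.norm_real, Real.norm_eq_abs, Real.norm_eq_abs, sq_abs, sq_abs]

lemma norm_e2_ofReal_neg_ofReal_mul (hu : ‖u‖ = 1) :
    ‖e2 y (-x * u)‖ = Real.sqrt (x ^ 2 + y ^ 2) := by
  rw [← Real.sqrt_sq (norm_nonneg _), norm_e2_sq, norm_mul, hu, mul_one, norm_neg,
    Complex.norm_real, Complex.norm_real, Real.norm_eq_abs, Real.norm_eq_abs, sq_abs, sq_abs,
    add_comm]

lemma inner_e2_ofReal_neg_ofReal_mul (hu : ‖u‖ = 1) :
    (inner ℂ (e2 y (-x * u)) (e2 x (y * u)) : ℂ) = 0 := by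
  have hconj : starRingEnd ℂ u * u = 1 := by
    rw [mul_comm, Complex.mul_conj, Complex.normSq_eq_norm_sq, hu]
    norm_num
  rw [inner_e2, map_mul, map_neg, Complex.conj_ofReal, Complex.conj_ofReal]
  linear_combination (-(x : ℂ) * y) * hconj

end Rotation

theorem stmt_7_general (s t : ℝ) (hs : s ∈ Set.Ioo (0 : ℝ) 1)
    (R : ℝ) (hR0 : 0 ≤ R) (hR : (2 * t - t ^ 2) * (2 * s - s ^ 2) = 1 - R ^ 2)
    (φ : ℝ) :
    ‖e2 ((1 - s : ℝ) : ℂ)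
        ((Real.sqrt (2 * s - s ^ 2) * (1 - t) : ℝ) * Complex.exp (φ * Complex.I))‖ = R ∧
    ‖e2 (((1 - t) * Real.sqrt (2 * s - s ^ 2) : ℝ) : ℂ)
        (-((1 - s : ℝ) : ℂ) * Complex.exp (φ * Complex.I))‖ = R ∧
    (inner ℂ
        (e2 (((1 - t) * Real.sqrt (2 * s - s ^ 2) : ℝ) : ℂ)
          (-((1 - s : ℝ) : ℂ) * Complex.exp (φ * Complex.I)))
        (e2 ((1 - s : ℝ) : ℂ)
          ((Real.sqrt (2 * s - s ^ 2) * (1 - t) : ℝ) * Complex.exp (φ * Complex.I)))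
      : ℂ) = 0 := by
  have hu : ‖Complex.exp (φ * Complex.I)‖ = 1 := Complex.norm_exp_ofReal_mul_I φ
  have hA : 0 ≤ 2 * s - s ^ 2 := by nlinarith [hs.1, hs.2]
  have hnorm : Real.sqrt ((1 - s) ^ 2 + (Real.sqrt (2 * s - s ^ 2) * (1 - t)) ^ 2) = R := by
    rw [← Real.sqrt_sq hR0, mul_pow, Real.sq_sqrt hA]
    congr 1
    linear_combination -hR
  rw [mul_comm (1 - t)]
  exact ⟨(norm_e2_ofReal_ofReal_mul _ _ hu).trans hnorm,
    (norm_e2_ofReal_neg_ofReal_mul _ _ hu).trans hnorm, inner_e2_ofReal_neg_ofReal_mul _ _ hu⟩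

/-- The line through p = (1-s, R₂(1-t)e^{iφ}) with direction v = ((1-t)R₂, -(1-s)e^{iφ})
is complex tangent to the sphere of radius R at p: ‖p‖ = ‖v‖ = R and ⟨v,p⟩ = 0. -/
theorem stmt_7 (s t : ℝ) (hs : s ∈ Set.Ioo (0 : ℝ) 1) (ht : t ∈ Set.Ioo (0 : ℝ) 1)
    (R : ℝ) (hR0 : 0 ≤ R) (hR : (2 * t - t ^ 2) * (2 * s - s ^ 2) = 1 - R ^ 2)
    (φ : ℝ) (hφ : φ ∈ Set.Ico 0 (2 * Real.pi)) :
    ‖e2 ((1 - s : ℝ) : ℂ)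
        ((Real.sqrt (2 * s - s ^ 2) * (1 - t) : ℝ) * Complex.exp (φ * Complex.I))‖ = R ∧
    ‖e2 (((1 - t) * Real.sqrt (2 * s - s ^ 2) : ℝ) : ℂ)
        (-((1 - s : ℝ) : ℂ) * Complex.exp (φ * Complex.I))‖ = R ∧
    (inner ℂ
        (e2 (((1 - t) * Real.sqrt (2 * s - s ^ 2) : ℝ) : ℂ)
          (-((1 - s : ℝ) : ℂ) * Complex.exp (φ * Complex.I)))
        (e2 ((1 - s : ℝ) : ℂ)
          ((Real.sqrt (2 * s - s ^ 2) * (1 - t) : ℝ) * Complex.exp (φ * Complex.I)))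
      : ℂ) = 0 :=
  stmt_7_general s t hs R hR0 hR φ
end

section
/- Let s,t ∈ (0,1), ν > 0, Q = (1-s+ν)/(1-s), R₂ = √(2s-s²), R² = 1 - (2t-t²)(2s-s²). For j,k ∈ ℤ and angles φ_j = 2πj/N, ψ ∈ ℝ, define p_j = (1-s, R₂(1-t)e^{iφ_j}), v_j = ((1-t)R₂, -(1-s)e^{iφ_j}), p*_k = (1-s, R₂(1-t)e^{i(φ_k+ψ)}), w_k = ((1-t)R₂, -(1-s+ν)e^{i(φ_k+ψ)}). If e^{i(φ_k - φ_j + ψ)} ≠ 1 and Q e^{i(φ_k-φ_j+ψ)} ≠ 1, then the complex lines ℓ_j = {p_j + v_j ζ} and ℓ*_k = {p*_k + w_k ζ} intersect in a unique point P_{j,k}, and ∥P_{j,k}∥² = R² (1 + (R₂²(1-t)²/(1-s)²) · F(φ_k - φ_j + ψ)²) where F(φ) = |1 - e^{iφ}|/|1 - Q e^{iφ}|. -/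
/-- Point p = (1 - s, ρ e^{iφ}). -/
noncomputable def pt (s ρ φ : ℝ) : EuclideanSpace ℂ (Fin 2) :=
  e2 ((1 - s : ℝ) : ℂ) ((ρ : ℂ) * Complex.exp (φ * Complex.I))

/-- Direction v = (c, -d e^{iφ}). -/
noncomputable def dir (c d φ : ℝ) : EuclideanSpace ℂ (Fin 2) :=
  e2 ((c : ℝ) : ℂ) (-((d : ℝ) : ℂ) * Complex.exp (φ * Complex.I))

/-- F(φ) = |1 - e^{iφ}| / |1 - Q e^{iφ}|. -/
noncomputable def Ffun (Q φ : ℝ) : ℝ :=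
  ‖(1 - Complex.exp (φ * Complex.I))‖ /
    ‖(1 - (Q : ℂ) * Complex.exp (φ * Complex.I))‖

open Complex

section Lines

variable (s ρ c d φ : ℝ) (ζ : ℂ)

@[simp]
lemma pt_add_smul_dir_apply_zero : (pt s ρ φ + ζ • dir c d φ) 0 = ((1 - s : ℝ) : ℂ) + ζ * c := by
  simp [pt, dir, e2]

@[simp]
lemma pt_add_smul_dir_apply_one :
    (pt s ρ φ + ζ • dir c d φ) 1 = (ρ - ζ * d) * exp (φ * I) := by
  simp [pt, dir, e2]
  ring

lemma norm_sq_pt_add_smul_dir :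
    ‖pt s ρ φ + ζ • dir ρ (1 - s) φ‖ ^ 2 = ((1 - s) ^ 2 + ρ ^ 2) * (1 + ‖ζ‖ ^ 2) := by
  rw [EuclideanSpace.norm_sq_eq, Fin.sum_univ_two, pt_add_smul_dir_apply_zero,
    pt_add_smul_dir_apply_one, norm_mul, norm_exp_ofReal_mul_I, mul_one]
  simp only [← normSq_eq_norm_sq, normSq_apply, add_re, add_im, sub_re, sub_im, mul_re, mul_im,
    ofReal_re, ofReal_im]
  ring

end Lines

noncomputable def intersectionParam (ρ d₁ d₂ φ₁ φ₂ : ℝ) : ℂ :=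
  ρ * (exp (φ₂ * I) - exp (φ₁ * I)) / (d₂ * exp (φ₂ * I) - d₁ * exp (φ₁ * I))

lemma pt_add_smul_dir_eq_iff {s ρ c d₁ d₂ φ₁ φ₂ : ℝ} (hc : c ≠ 0) {ζ₁ ζ₂ : ℂ} :
    pt s ρ φ₁ + ζ₁ • dir c d₁ φ₁ = pt s ρ φ₂ + ζ₂ • dir c d₂ φ₂ ↔
      ζ₁ = ζ₂ ∧ ζ₁ * (d₂ * exp (φ₂ * I) - d₁ * exp (φ₁ * I)) =
        ρ * (exp (φ₂ * I) - exp (φ₁ * I)) := by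
  have hc' : (c : ℂ) ≠ 0 := ofReal_ne_zero.mpr hc
  constructor
  · intro h
    have h0 := congrArg (· 0) h
    have h1 := congrArg (· 1) h
    simp only [pt_add_smul_dir_apply_zero, pt_add_smul_dir_apply_one, add_right_inj] at h0 h1
    obtain rfl := mul_right_cancel₀ hc' h0
    exact ⟨rfl, by linear_combination h1⟩
  · rintro ⟨rfl, h⟩
    ext i
    fin_cases i
    · simp [pt, dir, e2]
    · simp only [Fin.mk_one, pt_add_smul_dir_apply_one]
      linear_combination h

lemma mem_both_lines_iff {s ρ c d₁ d₂ φ₁ φ₂ : ℝ} (hc : c ≠ 0)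
    (hD : (d₂ : ℂ) * exp (φ₂ * I) - d₁ * exp (φ₁ * I) ≠ 0) (P : EuclideanSpace ℂ (Fin 2)) :
    ((∃ ζ : ℂ, P = pt s ρ φ₁ + ζ • dir c d₁ φ₁) ∧ (∃ ζ : ℂ, P = pt s ρ φ₂ + ζ • dir c d₂ φ₂)) ↔
      P = pt s ρ φ₁ + intersectionParam ρ d₁ d₂ φ₁ φ₂ • dir c d₁ φ₁ := by
  constructor
  · rintro ⟨⟨ζ₁, rfl⟩, ⟨ζ₂, h⟩⟩
    have hζ₁ := ((pt_add_smul_dir_eq_iff hc).1 h).2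
    rw [intersectionParam, ← (eq_div_iff hD).2 hζ₁]
  · rintro rfl
    refine ⟨⟨_, rfl⟩, ⟨intersectionParam ρ d₁ d₂ φ₁ φ₂, (pt_add_smul_dir_eq_iff hc).2 ⟨rfl, ?_⟩⟩⟩
    exact div_mul_cancel₀ _ hD

lemma intersection_denom_eq (d₁ d₂ φ₁ φ : ℝ) (hd : d₁ ≠ 0) :
    (d₂ : ℂ) * exp ((φ₁ + φ : ℝ) * I) - d₁ * exp (φ₁ * I) =
      -(d₁ * exp (φ₁ * I) * (1 - ((d₂ / d₁ : ℝ) : ℂ) * exp (φ * I))) := by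
  have hd' : (d₁ : ℂ) ≠ 0 := ofReal_ne_zero.mpr hd
  push_cast
  rw [add_mul, exp_add]
  field_simp
  ring

lemma intersection_denom_ne_zero {d₁ d₂ φ₁ φ : ℝ} (hd : d₁ ≠ 0)
    (h : ((d₂ / d₁ : ℝ) : ℂ) * exp (φ * I) ≠ 1) :
    (d₂ : ℂ) * exp ((φ₁ + φ : ℝ) * I) - d₁ * exp (φ₁ * I) ≠ 0 := by
  rw [intersection_denom_eq _ _ _ _ hd, neg_ne_zero]
  exact mul_ne_zero (mul_ne_zero (ofReal_ne_zero.mpr hd) (exp_ne_zero _)) (sub_ne_zero.mpr h.symm)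

lemma norm_intersectionParam (ρ d₁ d₂ φ₁ φ : ℝ) (hd : d₁ ≠ 0) :
    ‖intersectionParam ρ d₁ d₂ φ₁ (φ₁ + φ)‖ = |ρ| / |d₁| * Ffun (d₂ / d₁) φ := by
  have hnum : (ρ : ℂ) * (exp ((φ₁ + φ : ℝ) * I) - exp (φ₁ * I)) =
      -(ρ * exp (φ₁ * I) * (1 - exp (φ * I))) := by
    push_cast
    rw [add_mul, exp_add]
    ring
  rw [intersectionParam, hnum, intersection_denom_eq _ _ _ _ hd, Ffun, neg_div_neg_eq, norm_div,
    norm_mul, norm_mul, norm_mul, norm_mul, norm_exp_ofReal_mul_I, norm_real, norm_real,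
    Real.norm_eq_abs, Real.norm_eq_abs]
  ring

theorem stmt_11_general (s t ν : ℝ) (hs : s ∈ Set.Ioo (0 : ℝ) 1) (ht : t ∈ Set.Ioo (0 : ℝ) 1)
    (N : ℕ) (j k : ℤ) (ψ : ℝ)
    (R : ℝ) (hR : R ^ 2 = 1 - (2 * t - t ^ 2) * (2 * s - s ^ 2))
    (hexpQ : ((1 - s + ν) / (1 - s) : ℂ) *
        Complex.exp ((2 * Real.pi * k / N - 2 * Real.pi * j / N + ψ : ℝ) * Complex.I) ≠ 1) :
    (∃! P : EuclideanSpace ℂ (Fin 2),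
        (∃ ζ : ℂ, P = pt s (Real.sqrt (2 * s - s ^ 2) * (1 - t)) (2 * Real.pi * j / N) +
          ζ • dir ((1 - t) * Real.sqrt (2 * s - s ^ 2)) (1 - s) (2 * Real.pi * j / N)) ∧
        (∃ ζ : ℂ, P = pt s (Real.sqrt (2 * s - s ^ 2) * (1 - t)) (2 * Real.pi * k / N + ψ) +
          ζ • dir ((1 - t) * Real.sqrt (2 * s - s ^ 2)) (1 - s + ν)
            (2 * Real.pi * k / N + ψ))) ∧
    (∀ P : EuclideanSpace ℂ (Fin 2),
        ((∃ ζ : ℂ, P = pt s (Real.sqrt (2 * s - s ^ 2) * (1 - t)) (2 * Real.pi * j / N) +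
          ζ • dir ((1 - t) * Real.sqrt (2 * s - s ^ 2)) (1 - s) (2 * Real.pi * j / N)) ∧
        (∃ ζ : ℂ, P = pt s (Real.sqrt (2 * s - s ^ 2) * (1 - t)) (2 * Real.pi * k / N + ψ) +
          ζ • dir ((1 - t) * Real.sqrt (2 * s - s ^ 2)) (1 - s + ν)
            (2 * Real.pi * k / N + ψ))) →
        ‖P‖ ^ 2 = R ^ 2 * (1 +
          ((2 * s - s ^ 2) * (1 - t) ^ 2 / (1 - s) ^ 2) *
            (Ffun ((1 - s + ν) / (1 - s))
              (2 * Real.pi * k / N - 2 * Real.pi * j / N + ψ)) ^ 2)) := by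
  obtain ⟨hs0, hs1⟩ := hs
  have hss : 0 < 2 * s - s ^ 2 := by nlinarith
  have hρ : Real.sqrt (2 * s - s ^ 2) * (1 - t) ≠ 0 :=
    mul_ne_zero (Real.sqrt_pos.mpr hss).ne' (sub_ne_zero.mpr ht.2.ne')
  have hd : 1 - s ≠ 0 := sub_ne_zero.mpr hs1.ne'
  rw [mul_comm (1 - t), show 2 * Real.pi * k / N + ψ =
    2 * Real.pi * j / N + (2 * Real.pi * k / N - 2 * Real.pi * j / N + ψ) by ring]
  have hmem := mem_both_lines_iff (s := s) (ρ := √(2 * s - s ^ 2) * (1 - t)) hρ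
    (intersection_denom_ne_zero (φ₁ := 2 * Real.pi * j / N) hd (by exact_mod_cast hexpQ))
  refine ⟨⟨_, (hmem _).2 rfl, fun P hP => (hmem P).1 hP⟩, fun P hP => ?_⟩
  rw [(hmem P).1 hP, norm_sq_pt_add_smul_dir, norm_intersectionParam _ _ _ _ _ hd, hR]
  simp only [mul_pow, div_pow, sq_abs, Real.sq_sqrt hss.le]
  ring

/-- Squared norm of the intersection point of ℓ_j and ℓ*_k. -/
theorem stmt_11 (s t ν : ℝ) (hs : s ∈ Set.Ioo (0 : ℝ) 1) (ht : t ∈ Set.Ioo (0 : ℝ) 1)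
    (hν : 0 < ν) (N : ℕ) (hN : 0 < N) (j k : ℤ) (ψ : ℝ)
    (R : ℝ) (hR0 : 0 ≤ R) (hR : R ^ 2 = 1 - (2 * t - t ^ 2) * (2 * s - s ^ 2))
    (hexp : Complex.exp ((2 * Real.pi * k / N - 2 * Real.pi * j / N + ψ : ℝ) * Complex.I) ≠ 1)
    (hexpQ : ((1 - s + ν) / (1 - s) : ℂ) *
        Complex.exp ((2 * Real.pi * k / N - 2 * Real.pi * j / N + ψ : ℝ) * Complex.I) ≠ 1) :
    (∃! P : EuclideanSpace ℂ (Fin 2),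
        (∃ ζ : ℂ, P = pt s (Real.sqrt (2 * s - s ^ 2) * (1 - t)) (2 * Real.pi * j / N) +
          ζ • dir ((1 - t) * Real.sqrt (2 * s - s ^ 2)) (1 - s) (2 * Real.pi * j / N)) ∧
        (∃ ζ : ℂ, P = pt s (Real.sqrt (2 * s - s ^ 2) * (1 - t)) (2 * Real.pi * k / N + ψ) +
          ζ • dir ((1 - t) * Real.sqrt (2 * s - s ^ 2)) (1 - s + ν)
            (2 * Real.pi * k / N + ψ))) ∧
    (∀ P : EuclideanSpace ℂ (Fin 2),
        ((∃ ζ : ℂ, P = pt s (Real.sqrt (2 * s - s ^ 2) * (1 - t)) (2 * Real.pi * j / N) +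
          ζ • dir ((1 - t) * Real.sqrt (2 * s - s ^ 2)) (1 - s) (2 * Real.pi * j / N)) ∧
        (∃ ζ : ℂ, P = pt s (Real.sqrt (2 * s - s ^ 2) * (1 - t)) (2 * Real.pi * k / N + ψ) +
          ζ • dir ((1 - t) * Real.sqrt (2 * s - s ^ 2)) (1 - s + ν)
            (2 * Real.pi * k / N + ψ))) →
        ‖P‖ ^ 2 = R ^ 2 * (1 +
          ((2 * s - s ^ 2) * (1 - t) ^ 2 / (1 - s) ^ 2) *
            (Ffun ((1 - s + ν) / (1 - s))
              (2 * Real.pi * k / N - 2 * Real.pi * j / N + ψ)) ^ 2)) :=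
  stmt_11_general s t ν hs ht N j k ψ R hR hexpQ
end
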